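/- For every positive integer n there exists a rational number ε_n with 0 < ε_n < 1 such that for any hyperplanes X_1,…,X_{2n} in the Grassmannian of (n−1)-dimensional linear subspaces of ℝ^n, there exists a line P through the origin in ℝ^n such that for all hyperplanes Y_1,…,Y_{2n}, if δ(X_i, Y_i) < ε_n for each i, then δ(P, Y_i) > ε_n for each i. Here δ(V, W) for subspaces V, W of the same dimension is the operator norm ‖π_V − π_W‖ of the difference of orthogonal projections, and for a line P spanned by a unit vector v and a subspace X, δ(P, X) := |v − π_X(v)|. -/

import Mathlib

open MeasureTheory Set ENNReal
noncomputable section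

abbrev E (n : ℕ) := EuclideanSpace ℝ (Fin n)

/-- The inclusion-composed orthogonal projection onto a subspace. -/
def projL {n : ℕ} (V : Submodule ℝ (E n)) : E n →L[ℝ] E n :=
  V.subtypeL.comp (Submodule.orthogonalProjection V)

/-- δ(V,W) := ‖π_V − π_W‖ (operator norm). -/
def delta {n : ℕ} (V W : Submodule ℝ (E n)) : ℝ := ‖projL V - projL W‖

/-- δ(P,X) := |v − π_X(v)| for a line P spanned by the unit vector v. -/
def deltaLine {n : ℕ} (v : E n) (X : Submodule ℝ (E n)) : ℝ := ‖v - projL X v‖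

/-! A hyperplane `X` with unit normal `w` satisfies `δ(v, X) ≥ |⟪w, v⟫|`, and `δ(v, ·)` is
`1`-Lipschitz for `δ`, so it suffices to find, uniformly in the unit normals `w₁, …, w₂ₙ`, a unit
vector `v` with `|⟪wᵢ, v⟫| ≥ c` for all `i`. Among the `2n(n-1)+1` points `(1, t, …, t^(n-1))`
of the moment curve, each hyperplane `wᵢ^⊥` contains at most `n - 1` (roots of a nonzero
polynomial of degree `< n`), so one point avoids all of them; compactness of the product of
spheres makes the resulting bound uniform. -/

open Finset Filter Topology

theorem IsCompact.exists_pos_forall_exists_forall_le {X ι κ : Type*} [TopologicalSpace X]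
    [Finite κ] {K : Set X} (hK : IsCompact K) {f : ι → κ → X → ℝ}
    (hf : ∀ t i, Continuous (f t i)) (hpos : ∀ x ∈ K, ∃ t, ∀ i, 0 < f t i x) :
    ∃ c > 0, ∀ x ∈ K, ∃ t, ∀ i, c ≤ f t i x := by
  let U : ℕ → Set X := fun k => ⋃ t, ⋂ i, {x | 1 / ((k : ℝ) + 1) < f t i x}
  have hU_open : ∀ k, IsOpen (U k) := fun k =>
    isOpen_iUnion fun t => isOpen_iInter_of_finite fun i => isOpen_lt continuous_const (hf t i)
  have hU_mono : Monotone U := fun k l hkl =>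
    Set.iUnion_mono fun t => Set.iInter_mono fun i x (hx : 1 / ((k : ℝ) + 1) < f t i x) =>
      (Nat.one_div_le_one_div hkl).trans_lt hx
  have hKU : K ⊆ ⋃ k, U k := by
    intro x hx
    obtain ⟨t, ht⟩ := hpos x hx
    have : ∀ᶠ k : ℕ in atTop, ∀ i, 1 / ((k : ℝ) + 1) < f t i x :=
      eventually_all.2 fun i => tendsto_one_div_add_atTop_nhds_zero_nat.eventually_lt_const (ht i)
    obtain ⟨k, hk⟩ := this.exists
    exact Set.mem_iUnion.2 ⟨k, Set.mem_iUnion.2 ⟨t, Set.mem_iInter.2 hk⟩⟩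
  obtain ⟨k, hk⟩ := hK.elim_directed_cover U hU_open hKU hU_mono.directed_le
  refine ⟨1 / ((k : ℝ) + 1), by positivity, fun x hx => ?_⟩
  obtain ⟨t, ht⟩ := Set.mem_iUnion.1 (hk hx)
  exact ⟨t, fun i => (Set.mem_iInter.1 ht i).le⟩

theorem Finset.exists_forall_notMem_of_card_mul_lt {ι κ : Type*} [Fintype ι] [Fintype κ]
    [DecidableEq ι] (B : κ → Finset ι) {d : ℕ} (hB : ∀ i, #(B i) ≤ d)
    (h : Fintype.card κ * d < Fintype.card ι) : ∃ t, ∀ i, t ∉ B i := by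
  have hcard : #(univ.biUnion B) < #(univ : Finset ι) :=
    calc #(univ.biUnion B) ≤ ∑ i, #(B i) := card_biUnion_le
      _ ≤ Fintype.card κ * d := by simpa using sum_le_sum fun i (_ : i ∈ univ) => hB i
      _ < #(univ : Finset ι) := by rwa [card_univ]
  obtain ⟨t, -, ht⟩ := exists_mem_notMem_of_card_lt_card hcard
  exact ⟨t, fun i hi => ht (mem_biUnion.2 ⟨i, mem_univ i, hi⟩)⟩

def momentCurve (n : ℕ) (s : ℝ) : E n := WithLp.toLp 2 fun j => s ^ (j : ℕ)

theorem momentCurve_ne_zero {n : ℕ} (hn : 0 < n) (s : ℝ) : momentCurve n s ≠ 0 := by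
  intro h
  simpa [momentCurve] using congrArg (· ⟨0, hn⟩) h

theorem inner_momentCurve {n : ℕ} (u : E n) (s : ℝ) :
    inner ℝ u (momentCurve n s) = (Polynomial.ofFn n u.ofLp).eval s := by
  simp [Polynomial.ofFn_eq_sum_monomial, Polynomial.eval_finsetSum, PiLp.inner_apply,
    momentCurve, mul_comm]

theorem card_filter_inner_momentCurve_eq_zero_lt {n : ℕ} {ι : Type*} [Fintype ι]
    {s : ι → ℝ} (hs : Function.Injective s) {u : E n} (hu : u ≠ 0) :
    #{t | inner ℝ u (momentCurve n (s t)) = 0} < n := by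
  classical
  set q := Polynomial.ofFn n u.ofLp
  have hq : q ≠ 0 := fun h => hu <| by
    simpa using Polynomial.injective_ofFn n (h.trans (Polynomial.ofFn_zero n).symm)
  have hn : 1 ≤ n := Nat.one_le_iff_ne_zero.2 (Polynomial.ne_zero_of_ofFn_ne_zero hq)
  calc #{t | inner ℝ u (momentCurve n (s t)) = 0}
      = #(({t | inner ℝ u (momentCurve n (s t)) = 0} : Finset ι).image s) :=
        (card_image_of_injective _ hs).symm
    _ ≤ q.natDegree := Polynomial.card_le_degree_of_subset_roots fun x hx => by
        obtain ⟨t, ht, rfl⟩ := mem_image.1 hx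
        rw [Polynomial.mem_roots hq, Polynomial.IsRoot, ← inner_momentCurve]
        exact (mem_filter.1 ht).2
    _ < n := Polynomial.ofFn_natDegree_lt hn _

theorem exists_forall_inner_momentCurve_ne_zero {n : ℕ} {κ : Type*} [Fintype κ]
    {u : κ → E n} (hu : ∀ i, u i ≠ 0) :
    ∃ t : Fin (Fintype.card κ * (n - 1) + 1), ∀ i, inner ℝ (u i) (momentCurve n t) ≠ 0 := by
  classical
  obtain ⟨t, ht⟩ := Finset.exists_forall_notMem_of_card_mul_lt
    (ι := Fin (Fintype.card κ * (n - 1) + 1)) (d := n - 1)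
    (fun i => {t | inner ℝ (u i) (momentCurve n (t : ℕ)) = 0})
    (fun i => Nat.le_sub_one_of_lt <| card_filter_inner_momentCurve_eq_zero_lt
      (fun a b h => Fin.val_injective (Nat.cast_injective h)) (hu i))
    (by simp)
  exact ⟨t, fun i h => ht i (mem_filter.2 ⟨mem_univ t, h⟩)⟩

theorem exists_pos_forall_exists_abs_inner_ge {n : ℕ} (hn : 0 < n) (κ : Type*) [Fintype κ] :
    ∃ c > 0, ∀ u : κ → E n, (∀ i, ‖u i‖ = 1) →
      ∃ v : E n, ‖v‖ = 1 ∧ ∀ i, c ≤ |inner ℝ (u i) v| := by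
  let m : Fin (Fintype.card κ * (n - 1) + 1) → E n := fun t => momentCurve n (t : ℕ)
  have hm : ∀ t, m t ≠ 0 := fun t => momentCurve_ne_zero hn _
  let p := fun t => ‖m t‖⁻¹ • m t
  have hK : IsCompact (Set.univ.pi fun _ : κ => Metric.sphere (0 : E n) 1) :=
    isCompact_univ_pi fun _ => isCompact_sphere _ _
  obtain ⟨c, hc, hcK⟩ := hK.exists_pos_forall_exists_forall_le
    (f := fun t i u => |inner ℝ (u i) (p t)|) (fun t i => by fun_prop) <| by
      intro u hu
      obtain ⟨t, ht⟩ := exists_forall_inner_momentCurve_ne_zero (u := u)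
        fun i h => by simpa [h] using hu i trivial
      refine ⟨t, fun i => abs_pos.2 ?_⟩
      rw [real_inner_smul_right]
      exact mul_ne_zero (inv_ne_zero (norm_ne_zero_iff.2 (hm t))) (ht i)
  refine ⟨c, hc, fun u hu => ?_⟩
  obtain ⟨t, ht⟩ := hcK u fun i _ => mem_sphere_zero_iff_norm.2 (hu i)
  exact ⟨p t, norm_smul_inv_norm (hm t), ht⟩

theorem exists_norm_eq_one_mem_orthogonal {V : Type*} [NormedAddCommGroup V]
    [InnerProductSpace ℝ V] [FiniteDimensional ℝ V] {X : Submodule ℝ V}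
    (hX : Module.finrank ℝ X < Module.finrank ℝ V) : ∃ w : V, ‖w‖ = 1 ∧ w ∈ Xᗮ := by
  have hXtop : X ≠ ⊤ := fun h => by rw [h, finrank_top] at hX; exact lt_irrefl _ hX
  obtain ⟨w, hw, hw0⟩ :=
    Submodule.exists_mem_ne_zero_of_ne_bot (Submodule.orthogonal_eq_bot_iff.not.2 hXtop)
  exact ⟨‖w‖⁻¹ • w, norm_smul_inv_norm hw0, Submodule.smul_mem _ _ hw⟩

theorem abs_inner_le_deltaLine {n : ℕ} {X : Submodule ℝ (E n)} {w : E n} (hw : ‖w‖ = 1)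
    (hwX : w ∈ Xᗮ) (v : E n) : |inner ℝ w v| ≤ deltaLine v X := by
  have hproj : inner ℝ w (projL X v) = 0 :=
    Submodule.inner_left_of_mem_orthogonal (SetLike.coe_mem _) hwX
  calc |inner ℝ w v| = |inner ℝ w (v - projL X v)| := by rw [inner_sub_right, hproj, sub_zero]
    _ ≤ ‖w‖ * ‖v - projL X v‖ := abs_real_inner_le_norm _ _
    _ = deltaLine v X := by rw [hw, one_mul, deltaLine]

theorem deltaLine_le_deltaLine_add_delta {n : ℕ} {v : E n} (hv : ‖v‖ = 1)
    (X Y : Submodule ℝ (E n)) : deltaLine v X ≤ deltaLine v Y + delta X Y := by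
  calc deltaLine v X ≤ ‖v - projL Y v‖ + ‖projL Y v - projL X v‖ :=
        norm_sub_le_norm_sub_add_norm_sub _ _ _
    _ = deltaLine v Y + ‖(projL X - projL Y) v‖ := by
        rw [sub_apply, norm_sub_rev (projL Y v), deltaLine]
    _ ≤ deltaLine v Y + delta X Y := by
        grw [ContinuousLinearMap.le_opNorm, hv, mul_one, delta]

theorem stmt0 (n : ℕ) (hn : 0 < n) :
    ∃ ε : ℚ, 0 < ε ∧ ε < 1 ∧
      ∀ X : Fin (2 * n) → Submodule ℝ (E n),
        (∀ i, Module.finrank ℝ (X i) = n - 1) →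
        ∃ v : E n, ‖v‖ = 1 ∧
          ∀ Y : Fin (2 * n) → Submodule ℝ (E n),
            (∀ i, Module.finrank ℝ (Y i) = n - 1) →
            (∀ i, delta (X i) (Y i) < (ε : ℝ)) →
            ∀ i, deltaLine v (Y i) > (ε : ℝ) := by
  obtain ⟨c, hc, hcv⟩ := exists_pos_forall_exists_abs_inner_ge hn (Fin (2 * n))
  obtain ⟨ε, hε0, hε⟩ := exists_rat_btwn (show (0 : ℝ) < min 1 (c / 2) by positivity)
  refine ⟨ε, by exact_mod_cast hε0, by exact_mod_cast hε.trans_le (min_le_left _ _), ?_⟩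
  intro X hX
  choose w hw hwX using fun i => exists_norm_eq_one_mem_orthogonal (X := X i) <| by
    rw [hX i, finrank_euclideanSpace_fin]; omega
  obtain ⟨v, hv, hvw⟩ := hcv w hw
  refine ⟨v, hv, fun Y _ hXY i => ?_⟩
  have hXv : c ≤ deltaLine v (X i) := (hvw i).trans (abs_inner_le_deltaLine (hw i) (hwX i) v)
  have hXY_v := deltaLine_le_deltaLine_add_delta hv (X i) (Y i)
  have hεc : (ε : ℝ) < c / 2 := hε.trans_le (min_le_right _ _)
  linarith [hXY i]
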